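/- Let S be a nonempty set, (G, ·, d) a complete metric group whose metric d is invariant under left translations, φ : S → S, g : S → G, and let ε : S → ℝ≥0 be such that for every x ∈ S the series Σ_{n=0}^∞ ε(φⁿ(x)) converges. Suppose f : S → G satisfies d(f(φ(x)), g(x)·f(x)) ≤ ε(x) for all x ∈ S. For n ≥ 1 and x ∈ S define ε_n(x) = (g(φⁿ⁻¹(x))·g(φⁿ⁻²(x))·…·g(x))⁻¹ · f(φⁿ(x)). Then for every x ∈ S the sequence (ε_n(x))_{n≥1} is a Cauchy sequence in (G, d), and hence converges. -/
import Mathlib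


/-- The product `g(φ^{n-1}(x)) · g(φ^{n-2}(x)) · … · g(φ(x)) · g(x)`,
with factors of higher index multiplied on the left. -/
def leftProd {S G : Type*} [Group G] (φ : S → S) (g : S → G) (x : S) : ℕ → G
  | 0 => 1
  | n + 1 => g (φ^[n] x) * leftProd φ g x n

theorem cauchy_and_convergent
    {S G : Type*} [Nonempty S] [Group G] [MetricSpace G] [CompleteSpace G]
    (hinv : ∀ x y z : G, dist (x * y) (x * z) = dist y z)
    (φ : S → S) (g : S → G) (ε : S → NNReal)
    (hε : ∀ x : S, Summable (fun n : ℕ => ε (φ^[n] x)))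
    (f : S → G) (hf : ∀ x : S, dist (f (φ x)) (g x * f x) ≤ ε x) :
    ∀ x : S,
      CauchySeq (fun n : ℕ => (leftProd φ g x (n + 1))⁻¹ * f (φ^[n + 1] x)) ∧
      ∃ l : G, Filter.Tendsto
        (fun n : ℕ => (leftProd φ g x (n + 1))⁻¹ * f (φ^[n + 1] x))
        Filter.atTop (nhds l) := by
  intro x
  have hsum : Summable (fun n : ℕ => (ε (φ^[n + 1] x) : ℝ)) := by
    have := (summable_nat_add_iff (f := fun n : ℕ => (ε (φ^[n] x) : ℝ)) 1).mpr
      ((NNReal.summable_coe).mpr (hε x))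
    simpa using this
  have hcauchy : CauchySeq (fun n : ℕ => (leftProd φ g x (n + 1))⁻¹ * f (φ^[n + 1] x)) := by
    apply cauchySeq_of_dist_le_of_summable (fun n : ℕ => (ε (φ^[n + 1] x) : ℝ)) _ hsum
    intro n
    have h1 : leftProd φ g x (n + 2) = g (φ^[n + 1] x) * leftProd φ g x (n + 1) := rfl
    have key : dist ((leftProd φ g x (n + 1))⁻¹ * f (φ^[n + 1] x))
        ((leftProd φ g x (n + 2))⁻¹ * f (φ^[n + 2] x))
        = dist (f (φ^[n + 1] x)) ((g (φ^[n + 1] x))⁻¹ * f (φ^[n + 2] x)) := by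
      rw [h1, mul_inv_rev, mul_assoc, hinv]
    rw [key]
    have h2 : dist (f (φ^[n + 1] x)) ((g (φ^[n + 1] x))⁻¹ * f (φ^[n + 2] x))
        = dist (g (φ^[n + 1] x) * f (φ^[n + 1] x)) (f (φ^[n + 2] x)) := by
      rw [← hinv (g (φ^[n + 1] x)), mul_inv_cancel_left]
    rw [h2, dist_comm]
    have : φ^[n + 2] x = φ (φ^[n + 1] x) := by
      rw [Function.iterate_succ_apply']
    rw [this]
    exact hf (φ^[n + 1] x)
  exact ⟨hcauchy, cauchySeq_tendsto_of_complete hcauchy⟩
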